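/- Let G be the discrete Heisenberg group ⟨a,b,c | [a,b]=c, [a,c]=[b,c]=1⟩. Then for every d ≥ 6, G_bound(d) is trivial; consequently G_bound is trivial: for every nonidentity g ∈ G and every constant M > 0 there exists a finite symmetric generating set S of G of cardinality at most 6 with l_S(g) > M. -/

import Mathlib

/-- A finite symmetric generating set of a group. -/
def IsSymmGen {G : Type*} [Group G] (S : Finset G) : Prop :=
  (∀ s ∈ S, s⁻¹ ∈ S) ∧ Subgroup.closure (S : Set G) = ⊤

/-- The word length of `g` with respect to `S`: the least `n` such that
`g` is a product of `n` elements of `S`. -/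
noncomputable def wordLen {G : Type*} [Group G] (S : Finset G) (g : G) : ℕ :=
  sInf {n : ℕ | ∃ w : List G, (∀ s ∈ w, s ∈ S) ∧ w.length = n ∧ w.prod = g}

/-- Elements of uniformly bounded word length. -/
def GBound (G : Type*) [Group G] : Set G :=
  {g | ∃ M : ℕ, 0 < M ∧ ∀ S : Finset G, IsSymmGen S → wordLen S g ≤ M}

/-- Elements of uniformly bounded word length over symmetric generating sets of
cardinality at most `d`. -/
def GBoundD (G : Type*) [Group G] (d : ℕ) : Set G :=
  {g | ∃ M : ℕ, 0 < M ∧ ∀ S : Finset G, IsSymmGen S → S.card ≤ d →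
    wordLen S g ≤ M}

/-- Relations of the Heisenberg group `⟨a,b,c | [a,b] = c, [a,c] = [b,c] = 1⟩`.
Here `0, 1, 2` stand for `a, b, c`. -/
def heisenbergRels : Set (FreeGroup (Fin 3)) :=
  { FreeGroup.of 0 * FreeGroup.of 1 * (FreeGroup.of 0)⁻¹ * (FreeGroup.of 1)⁻¹ *
      (FreeGroup.of 2)⁻¹,
    FreeGroup.of 0 * FreeGroup.of 2 * (FreeGroup.of 0)⁻¹ * (FreeGroup.of 2)⁻¹,
    FreeGroup.of 1 * FreeGroup.of 2 * (FreeGroup.of 1)⁻¹ * (FreeGroup.of 2)⁻¹ }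

/-- The discrete Heisenberg group. -/
abbrev Heisenberg : Type := PresentedGroup heisenbergRels

/-!
Identify the group with the integer unitriangular group `H3` via `⟨x, y, z⟩ ↦ b^y a^x c^z`.
Up to the automorphism exchanging `a` and `b`, a nontrivial `g` has `y ≠ 0` or `z ≠ 0`.
For large `N` take the generators `a, b^N, b^(N²+1) a` and their inverses. A product of
`L` of them has `y = N m + (N²+1) k` with `|m|, |k| ≤ L` and `z = N w + (N²+1) u` with
`|u|, |w| ≤ L²`. Since `N p + (N²+1) q ≡ q (mod N)`, such a combination that is small
compared to `N` forces `q` to be the value itself and then `p = -N q`, which is too large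
unless `q = 0`. So once `N > M² + M + |y| + |z|`, every word of length `≤ M` has `y = z = 0`.
-/

open scoped commutatorElement Pointwise

theorem zpow_mul_zpow_eq_of_commute_commutatorElement {G : Type*} [Group G] {a b : G}
    (ha : Commute a ⁅a, b⁆) (hb : Commute b ⁅a, b⁆) (m n : ℤ) :
    a ^ m * b ^ n = b ^ n * a ^ m * ⁅a, b⁆ ^ (m * n) := by
  have hab : SemiconjBy a b (b * ⁅a, b⁆) := by
    rw [SemiconjBy, hb.eq, commutatorElement_def]
    group
  have hbn : SemiconjBy (b ^ n) (a * ⁅a, b⁆ ^ n) a := by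
    rw [SemiconjBy, ← mul_assoc, mul_assoc _ a, (ha.zpow_right n).eq, ← mul_assoc,
      ← hb.mul_zpow]
    exact (hab.zpow_right n).symm
  rw [← (hbn.zpow_right m).eq, (ha.zpow_right n).mul_zpow, ← zpow_mul, mul_comm n m,
    mul_assoc]

theorem Int.mul_add_sq_add_one_mul_eq_zero {N p q B : ℤ} (hp : |p| ≤ B) (hq : |q| ≤ B)
    (hN : B + |N * p + (N ^ 2 + 1) * q| < N) : N * p + (N ^ 2 + 1) * q = 0 := by
  have hN0 : 0 < N := by
    linarith [(abs_nonneg q).trans hq, abs_nonneg (N * p + (N ^ 2 + 1) * q)]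
  have hv : N * p + (N ^ 2 + 1) * q = q := by
    have hdvd : N ∣ N * p + (N ^ 2 + 1) * q - q := ⟨p + N * q, by ring⟩
    have hlt : |N * p + (N ^ 2 + 1) * q - q| < N := (abs_sub _ _).trans_lt (by linarith)
    linarith [Int.eq_zero_of_abs_lt_dvd hdvd hlt]
  have hp' : p = -(N * q) := by
    have : N * (p + N * q) = N * 0 := by linear_combination hv
    linarith [mul_left_cancel₀ hN0.ne' this]
  have hq0 : q = 0 := by
    rw [hp', abs_neg, abs_mul, abs_of_pos hN0] at hp
    rcases eq_or_ne q 0 with h | h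
    · exact h
    · nlinarith [Int.one_le_abs h, abs_nonneg (N * p + (N ^ 2 + 1) * q)]
  rw [hv, hq0]

section WordLength

variable {G H : Type*} [Group G] [Group H]

lemma IsSymmGen.exists_list_prod_eq {S : Finset G} (hS : IsSymmGen S) (g : G) :
    ∃ w : List G, (∀ s ∈ w, s ∈ S) ∧ w.prod = g := by
  have hinv : (S : Set G)⁻¹ ⊆ S := fun s hs => by simpa using hS.1 _ hs
  have hg : g ∈ (Subgroup.closure (S : Set G)).toSubmonoid := by simp [hS.2]
  rw [Subgroup.closure_toSubmonoid, Set.union_eq_left.2 hinv] at hg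
  exact Submonoid.exists_list_of_mem_closure hg

lemma lt_wordLen {S : Finset G} (hS : IsSymmGen S) {g : G} {M : ℕ}
    (h : ∀ w : List G, (∀ s ∈ w, s ∈ S) → w.prod = g → M < w.length) :
    M < wordLen S g := by
  obtain ⟨w, hw, hwg⟩ := hS.exists_list_prod_eq g
  obtain ⟨w', hw', hlen, hw'g⟩ := Nat.sInf_mem (s := {n | ∃ w : List G, (∀ s ∈ w, s ∈ S) ∧
    w.length = n ∧ w.prod = g}) ⟨_, w, hw, rfl, hwg⟩
  unfold wordLen
  rw [← hlen]
  exact h w' hw' hw'g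

lemma wordLen_one (S : Finset G) : wordLen S 1 = 0 :=
  Nat.sInf_eq_zero.2 (Or.inl ⟨[], by simp⟩)

lemma isSymmGen_union_inv [DecidableEq G] {T : Finset G}
    (hT : Subgroup.closure (T : Set G) = ⊤) : IsSymmGen (T ∪ T⁻¹) := by
  refine ⟨fun s hs => ?_, eq_top_mono (Subgroup.closure_mono ?_) hT⟩
  · rw [Finset.mem_union, Finset.mem_inv'] at hs ⊢
    rw [inv_inv]
    exact hs.symm
  · simp

lemma IsSymmGen.image [DecidableEq H] {S : Finset G} (hS : IsSymmGen S) (e : G ≃* H) :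
    IsSymmGen (S.image e) := by
  refine ⟨?_, ?_⟩
  · simp only [Finset.mem_image]
    rintro _ ⟨s, hs, rfl⟩
    exact ⟨s⁻¹, hS.1 s hs, map_inv e s⟩
  · rw [Finset.coe_image]
    change Subgroup.closure ((e : G →* H) '' S) = ⊤
    rw [← MonoidHom.map_closure, hS.2]
    exact Subgroup.map_top_of_surjective _ e.surjective

lemma wordLen_image [DecidableEq H] (S : Finset G) (e : G ≃* H) (g : G) :
    wordLen (S.image e) (e g) = wordLen S g := by
  unfold wordLen
  congr 1
  ext n
  constructor
  · rintro ⟨w, hw, rfl, hwg⟩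
    refine ⟨w.map e.symm, fun s hs => ?_, List.length_map _, ?_⟩
    · obtain ⟨t, ht, rfl⟩ := List.mem_map.1 hs
      obtain ⟨r, hr, rfl⟩ := Finset.mem_image.1 (hw t ht)
      simpa using hr
    · rw [← map_list_prod, hwg, MulEquiv.symm_apply_apply]
  · rintro ⟨w, hw, rfl, hwg⟩
    refine ⟨w.map e, fun s hs => ?_, List.length_map _, by rw [← map_list_prod, hwg]⟩
    obtain ⟨t, ht, rfl⟩ := List.mem_map.1 hs
    exact Finset.mem_image_of_mem e (hw t ht)

variable (G) in
def WordLenUnbounded (d : ℕ) (g : G) : Prop :=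
  ∀ M : ℕ, ∃ S : Finset G, IsSymmGen S ∧ S.card ≤ d ∧ M < wordLen S g

lemma WordLenUnbounded.map {d : ℕ} {g : G} (h : WordLenUnbounded G d g) (e : G ≃* H) :
    WordLenUnbounded H d (e g) := by
  classical
  intro M
  obtain ⟨S, hS, hcard, hM⟩ := h M
  exact ⟨S.image e, hS.image e, Finset.card_image_le.trans hcard,
    (wordLen_image S e g).symm ▸ hM⟩

lemma one_mem_GBound : (1 : G) ∈ GBound G :=
  ⟨1, one_pos, fun S _ => (wordLen_one S).trans_le zero_le_one⟩

lemma one_mem_GBoundD (d : ℕ) : (1 : G) ∈ GBoundD G d :=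
  ⟨1, one_pos, fun S _ _ => (wordLen_one S).trans_le zero_le_one⟩

lemma GBound_subset_GBoundD (d : ℕ) : GBound G ⊆ GBoundD G d :=
  fun _ ⟨M, hM, h⟩ => ⟨M, hM, fun S hS _ => h S hS⟩

lemma GBoundD_antitone : Antitone (GBoundD G) :=
  fun _ _ hdd' _ ⟨M, hM, h⟩ => ⟨M, hM, fun S hS hcard => h S hS (hcard.trans hdd')⟩

lemma GBoundD_eq_singleton_one {d : ℕ} (h : ∀ g : G, g ≠ 1 → WordLenUnbounded G d g) :
    GBoundD G d = {1} := by
  refine Set.Subset.antisymm (fun g ⟨M, _, hM⟩ => ?_) (by simpa using one_mem_GBoundD d)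
  by_contra hg
  obtain ⟨S, hS, hcard, hlt⟩ := h g hg M
  exact (hM S hS hcard).not_gt hlt

end WordLength

/-- `⟨x, y, z⟩` is the unitriangular matrix `[[1, x, z], [0, 1, y], [0, 0, 1]]`. -/
@[ext] structure H3 where
  x : ℤ
  y : ℤ
  z : ℤ
deriving DecidableEq

namespace H3

instance : Mul H3 := ⟨fun g h => ⟨g.x + h.x, g.y + h.y, g.z + h.z + g.x * h.y⟩⟩
instance : One H3 := ⟨⟨0, 0, 0⟩⟩
instance : Inv H3 := ⟨fun g => ⟨-g.x, -g.y, g.x * g.y - g.z⟩⟩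

@[simp] lemma mul_def (g h : H3) : g * h = ⟨g.x + h.x, g.y + h.y, g.z + h.z + g.x * h.y⟩ := rfl
@[simp] lemma one_def : (1 : H3) = ⟨0, 0, 0⟩ := rfl
@[simp] lemma inv_def (g : H3) : g⁻¹ = ⟨-g.x, -g.y, g.x * g.y - g.z⟩ := rfl

instance : Group H3 where
  mul_assoc _ _ _ := by ext <;> simp <;> ring
  one_mul _ := by ext <;> simp
  mul_one _ := by ext <;> simp
  inv_mul_cancel _ := by ext <;> simp

lemma mk_zpow {x y : ℤ} (hxy : x * y = 0) (z n : ℤ) :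
    (⟨x, y, z⟩ : H3) ^ n = ⟨n * x, n * y, n * z⟩ := by
  induction n using Int.induction_on with
  | zero => simp
  | succ k ih => rw [zpow_add_one, ih]; ext <;> simp <;> grind
  | pred k ih => rw [zpow_sub_one, ih]; ext <;> simp <;> grind

def a : H3 := ⟨1, 0, 0⟩
def b : H3 := ⟨0, 1, 0⟩
def c : H3 := ⟨0, 0, 1⟩

@[simp] lemma a_zpow (n : ℤ) : a ^ n = ⟨n, 0, 0⟩ := by simp [a, mk_zpow]
@[simp] lemma b_zpow (n : ℤ) : b ^ n = ⟨0, n, 0⟩ := by simp [b, mk_zpow]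
@[simp] lemma c_zpow (n : ℤ) : c ^ n = ⟨0, 0, n⟩ := by simp [c, mk_zpow]

lemma b_zpow_mul_a_zpow_mul_c_zpow (g : H3) : b ^ g.y * a ^ g.x * c ^ g.z = g := by
  ext <;> simp

lemma commutatorElement_a_b : ⁅a, b⁆ = c := rfl

lemma closure_a_b : Subgroup.closure {a, b} = ⊤ := by
  refine (Subgroup.eq_top_iff' _).2 fun g => ?_
  have ha : a ∈ Subgroup.closure {a, b} := Subgroup.subset_closure (by simp)
  have hb : b ∈ Subgroup.closure {a, b} := Subgroup.subset_closure (by simp)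
  have hc : c ∈ Subgroup.closure {a, b} := by
    rw [← commutatorElement_a_b, commutatorElement_def]
    exact mul_mem (mul_mem (mul_mem ha hb) (inv_mem ha)) (inv_mem hb)
  rw [← b_zpow_mul_a_zpow_mul_c_zpow g]
  exact mul_mem (mul_mem (zpow_mem hb _) (zpow_mem ha _)) (zpow_mem hc _)

def swap : H3 ≃* H3 where
  toFun g := ⟨g.y, g.x, g.x * g.y - g.z⟩
  invFun g := ⟨g.y, g.x, g.x * g.y - g.z⟩
  left_inv g := by ext <;> simp [mul_comm]
  right_inv g := by ext <;> simp [mul_comm]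
  map_mul' g h := by ext <;> simp; ring

def gens (N : ℤ) : Finset H3 := {a, b ^ N, b ^ (N ^ 2 + 1) * a}

lemma closure_gens (N : ℤ) : Subgroup.closure (gens N : Set H3) = ⊤ := by
  have ha : a ∈ Subgroup.closure (gens N : Set H3) := Subgroup.subset_closure (by simp [gens])
  have hbN : b ^ N ∈ Subgroup.closure (gens N : Set H3) :=
    Subgroup.subset_closure (by simp [gens])
  have hbNa : b ^ (N ^ 2 + 1) * a ∈ Subgroup.closure (gens N : Set H3) :=
    Subgroup.subset_closure (by simp [gens])
  have hb : b = b ^ (N ^ 2 + 1) * a * a⁻¹ * (b ^ N) ^ (-N) := by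
    rw [mul_inv_cancel_right, ← zpow_mul, ← zpow_add]
    ring_nf
    rw [zpow_one]
  rw [eq_top_iff, ← closure_a_b, Subgroup.closure_le, Set.insert_subset_iff,
    Set.singleton_subset_iff, hb]
  exact ⟨ha, mul_mem (mul_mem hbNa (inv_mem ha)) (zpow_mem hbN _)⟩

lemma card_gens_union_inv_le (N : ℤ) : (gens N ∪ (gens N)⁻¹).card ≤ 6 := by
  have h3 : (gens N).card ≤ 3 := Finset.card_le_three
  have := Finset.card_union_le (gens N) (gens N)⁻¹
  rw [Finset.card_inv] at this
  omega

def box (N : ℤ) (L : ℕ) : Set H3 :=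
  {g | |g.x| ≤ L ∧ ∃ m k u w : ℤ, |m| ≤ L ∧ |k| ≤ L ∧ |u| ≤ L ^ 2 ∧ |w| ≤ L ^ 2 ∧
    g.y = N * m + (N ^ 2 + 1) * k ∧ g.z = N * w + (N ^ 2 + 1) * u}

lemma one_mem_box (N : ℤ) : 1 ∈ box N 0 := ⟨by simp, 0, 0, 0, 0, by simp⟩

lemma mul_mem_box {N : ℤ} {L L' : ℕ} {g h : H3} (hg : g ∈ box N L) (hh : h ∈ box N L') :
    g * h ∈ box N (L + L') := by
  obtain ⟨hx, m, k, u, w, hm, hk, hu, hw, hy, hz⟩ := hg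
  obtain ⟨hx', m', k', u', w', hm', hk', hu', hw', hy', hz'⟩ := hh
  have hquad {p q r : ℤ} (hp : |p| ≤ L ^ 2) (hq : |q| ≤ L' ^ 2) (hr : |r| ≤ L') :
      |p + q + g.x * r| ≤ ((L + L' : ℕ) : ℤ) ^ 2 := by
    have hxr : |g.x * r| ≤ L * L' :=
      abs_mul g.x r ▸ mul_le_mul hx hr (abs_nonneg _) (Int.natCast_nonneg L)
    calc |p + q + g.x * r| ≤ |p| + |q| + |g.x * r| := abs_add_three _ _ _
      _ ≤ ((L + L' : ℕ) : ℤ) ^ 2 := by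
        push_cast
        nlinarith [Int.natCast_nonneg L, Int.natCast_nonneg L']
  refine ⟨?_, m + m', k + k', u + u' + g.x * k', w + w' + g.x * m',
    ?_, ?_, hquad hu hu' hk', hquad hw hw' hm', ?_, ?_⟩
  · simpa using (abs_add_le _ _).trans (add_le_add hx hx')
  · simpa using (abs_add_le _ _).trans (add_le_add hm hm')
  · simpa using (abs_add_le _ _).trans (add_le_add hk hk')
  · simp only [mul_def, hy, hy']; ring
  · simp only [mul_def, hz, hz', hy']; ring

lemma list_prod_mem_box {N : ℤ} {w : List H3} (hw : ∀ s ∈ w, s ∈ box N 1) :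
    w.prod ∈ box N w.length := by
  induction w with
  | nil => exact one_mem_box N
  | cons s t ih =>
    rw [List.prod_cons, List.length_cons, add_comm]
    exact mul_mem_box (hw s List.mem_cons_self) (ih fun r hr => hw r (List.mem_cons_of_mem s hr))

lemma mem_box_of_mem_gens_union_inv {N : ℤ} {s : H3} (hs : s ∈ gens N ∪ (gens N)⁻¹) :
    s ∈ box N 1 := by
  simp only [gens, Finset.mem_union, Finset.mem_inv', Finset.mem_insert, Finset.mem_singleton,
    inv_eq_iff_eq_inv] at hs
  rcases hs with (rfl | rfl | rfl) | rfl | rfl | rfl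
  · exact ⟨by simp [a], 0, 0, 0, 0, by simp [a]⟩
  · exact ⟨by simp, 1, 0, 0, 0, by simp⟩
  · exact ⟨by simp [a], 0, 1, 0, 0, by simp [a]⟩
  · exact ⟨by simp [a], 0, 0, 0, 0, by simp [a]⟩
  · exact ⟨by simp, -1, 0, 0, 0, by simp⟩
  · exact ⟨by simp [a], 0, -1, 1, 0, by simp [a]⟩

lemma y_eq_zero_of_mem_box {N : ℤ} {L : ℕ} {g : H3} (hg : g ∈ box N L) (hN : L + |g.y| < N) :
    g.y = 0 := by
  obtain ⟨-, m, k, -, -, hm, hk, -, -, hy, -⟩ := hg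
  rw [hy] at hN ⊢
  exact Int.mul_add_sq_add_one_mul_eq_zero hm hk hN

lemma z_eq_zero_of_mem_box {N : ℤ} {L : ℕ} {g : H3} (hg : g ∈ box N L)
    (hN : L ^ 2 + |g.z| < N) : g.z = 0 := by
  obtain ⟨-, -, -, u, w, -, -, hu, hw, -, hz⟩ := hg
  rw [hz] at hN ⊢
  exact Int.mul_add_sq_add_one_mul_eq_zero hw hu (by exact_mod_cast hN)

lemma lt_wordLen_gens_union_inv {N : ℤ} {M : ℕ} {g : H3} (hy : M + |g.y| < N)
    (hz : M ^ 2 + |g.z| < N) (hg : g.y ≠ 0 ∨ g.z ≠ 0) :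
    M < wordLen (gens N ∪ (gens N)⁻¹) g := by
  refine lt_wordLen (isSymmGen_union_inv (closure_gens N)) fun w hw hwg => ?_
  by_contra! hlen
  have hbox : g ∈ box N w.length :=
    hwg ▸ list_prod_mem_box fun s hs => mem_box_of_mem_gens_union_inv (hw s hs)
  have hL : (w.length : ℤ) ≤ M := by exact_mod_cast hlen
  rcases hg with hgy | hgz
  · exact hgy (y_eq_zero_of_mem_box hbox (by linarith))
  · exact hgz (z_eq_zero_of_mem_box hbox (by nlinarith [Int.natCast_nonneg w.length]))

lemma wordLenUnbounded_of_y_ne_zero_or_z_ne_zero {g : H3} (hg : g.y ≠ 0 ∨ g.z ≠ 0) :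
    WordLenUnbounded H3 6 g := fun M =>
  ⟨_, isSymmGen_union_inv (closure_gens (M ^ 2 + M + |g.y| + |g.z| + 1)),
    card_gens_union_inv_le _,
    lt_wordLen_gens_union_inv (by nlinarith [abs_nonneg g.z]) (by linarith [abs_nonneg g.y]) hg⟩

theorem wordLenUnbounded {g : H3} (hg : g ≠ 1) : WordLenUnbounded H3 6 g := by
  by_cases hyz : g.y = 0 ∧ g.z = 0
  · have hx : (swap g).y ≠ 0 := fun hx => hg (H3.ext hx hyz.1 hyz.2)
    simpa using (wordLenUnbounded_of_y_ne_zero_or_z_ne_zero (Or.inl hx)).map swap.symm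
  · exact wordLenUnbounded_of_y_ne_zero_or_z_ne_zero (not_and_or.1 hyz)

end H3

namespace Heisenberg

def A : Heisenberg := PresentedGroup.of 0
def B : Heisenberg := PresentedGroup.of 1
def C : Heisenberg := PresentedGroup.of 2

lemma commutatorElement_A_B : ⁅A, B⁆ = C := by
  have h := PresentedGroup.one_of_mem (rels := heisenbergRels) (Set.mem_insert _ _)
  simp only [map_mul, map_inv] at h
  exact mul_inv_eq_one.1 h

lemma commute_A_C : Commute A C := by
  have h := PresentedGroup.one_of_mem (rels := heisenbergRels)
    (Set.mem_insert_of_mem _ (Set.mem_insert _ _))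
  simp only [map_mul, map_inv] at h
  exact commutatorElement_eq_one_iff_commute.1 h

lemma commute_B_C : Commute B C := by
  have h := PresentedGroup.one_of_mem (rels := heisenbergRels)
    (Set.mem_insert_of_mem _ (Set.mem_insert_of_mem _ rfl))
  simp only [map_mul, map_inv] at h
  exact commutatorElement_eq_one_iff_commute.1 h

lemma zpow_A_mul_zpow_B (m n : ℤ) : A ^ m * B ^ n = B ^ n * A ^ m * C ^ (m * n) := by
  have h := commutatorElement_A_B
  rw [← h]
  exact zpow_mul_zpow_eq_of_commute_commutatorElement (h ▸ commute_A_C) (h ▸ commute_B_C) m n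

def toH3 : Heisenberg →* H3 :=
  PresentedGroup.toGroup (f := ![H3.a, H3.b, H3.c]) (by rintro r (rfl | rfl | rfl) <;> rfl)

def ofH3 : H3 →* Heisenberg where
  toFun g := B ^ g.y * A ^ g.x * C ^ g.z
  map_one' := by simp
  map_mul' g h := by
    have hA (m k : ℤ) : A ^ m * C ^ k = C ^ k * A ^ m := (commute_A_C.zpow_zpow m k).eq
    have hBA (l m k : ℤ) : C ^ k * B ^ l * A ^ m = B ^ l * A ^ m * C ^ k := by
      rw [mul_assoc]
      exact (((commute_B_C.zpow_zpow l k).mul_left (commute_A_C.zpow_zpow m k)).eq).symm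
    calc B ^ (g.y + h.y) * A ^ (g.x + h.x) * C ^ (g.z + h.z + g.x * h.y)
        = B ^ g.y * (B ^ h.y * A ^ g.x * C ^ (g.x * h.y)) * A ^ h.x * C ^ (g.z + h.z) := by
          rw [zpow_add B, zpow_add A, add_comm _ (g.x * h.y), zpow_add C]
          simp only [mul_assoc]
          rw [← mul_assoc (A ^ h.x), hA, mul_assoc]
      _ = B ^ g.y * A ^ g.x * C ^ g.z * (B ^ h.y * A ^ h.x * C ^ h.z) := by
          rw [← zpow_A_mul_zpow_B, zpow_add C]
          simp only [mul_assoc]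
          rw [← mul_assoc (C ^ g.z), ← mul_assoc (C ^ g.z * B ^ h.y), hBA]
          simp only [mul_assoc]

lemma toH3_comp_ofH3 : toH3.comp ofH3 = MonoidHom.id H3 := by
  ext1 g
  simp [toH3, ofH3, A, B, C, PresentedGroup.toGroup.of]

lemma ofH3_comp_toH3 : ofH3.comp toH3 = MonoidHom.id Heisenberg := by
  refine PresentedGroup.ext fun i => ?_
  fin_cases i <;> simp [toH3, ofH3, A, B, C, PresentedGroup.toGroup.of, H3.a, H3.b, H3.c]

def equivH3 : Heisenberg ≃* H3 := toH3.toMulEquiv ofH3 ofH3_comp_toH3 toH3_comp_ofH3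

theorem wordLenUnbounded {g : Heisenberg} (hg : g ≠ 1) : WordLenUnbounded Heisenberg 6 g := by
  simpa using (H3.wordLenUnbounded (equivH3.map_ne_one_iff.2 hg)).map equivH3.symm

end Heisenberg

/-- In the Heisenberg group, `G_bound(d)` is trivial for every `d ≥ 6`, and
`G_bound` is trivial: every nontrivial element has unbounded word length over
symmetric generating sets of cardinality at most `6`. -/
theorem stmt19 :
    (∀ d : ℕ, 6 ≤ d → GBoundD Heisenberg d = {1}) ∧
    GBound Heisenberg = {1} ∧
    (∀ g : Heisenberg, g ≠ 1 → ∀ M : ℕ, 0 < M →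
      ∃ S : Finset Heisenberg, IsSymmGen S ∧ S.card ≤ 6 ∧ M < wordLen S g) := by
  have h6 : GBoundD Heisenberg 6 = {1} :=
    GBoundD_eq_singleton_one fun _ => Heisenberg.wordLenUnbounded
  refine ⟨fun d hd => ?_, ?_, fun g hg M _ => Heisenberg.wordLenUnbounded hg M⟩
  · exact (h6 ▸ GBoundD_antitone hd).antisymm (Set.singleton_subset_iff.2 (one_mem_GBoundD d))
  · exact (h6 ▸ GBound_subset_GBoundD 6).antisymm (Set.singleton_subset_iff.2 one_mem_GBound)
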